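/- (Simpliciality, case m₁ = m₂ = m₃ ≥ 2) Assume m₁ = m₂ = m₃ ≥ 2. Then conv(S) is a simplicial polytope: for every nonempty subset F ⊆ S with F ≠ S such that the convex hull of F is an extreme subset of the convex hull of S, the set F is affinely independent. -/

import Mathlib

/-! The `n + 2` points of `S` span an `n`-dimensional space, so their linear relations form a
plane; the relations `𝟙_{V₁} - 𝟙_{V₂}` and `𝟙_{V₂} - 𝟙_{V₃}` already span it, hence every linear
relation on `S` is constant on each block `Vᵢ`. A point `y` of a block (of size at least two) that
is not in `F` is therefore not in `conv F`: writing it as a convex combination of `F` would give a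
relation taking the value `-1` at `y` and a nonnegative value at another point of its block.

All blocks have the same size `m`, hence the same centroid `𝟙 / m`. If one block lay in `F`, this
centroid would lie in the face `conv F`; since it is a positive combination of the points of a
block meeting `S \ F`, extremality would put those points into `conv F`, which is impossible. So
every block meets `S \ F`, and a linear relation supported on `F`, being constant on blocks,
vanishes: `F` is linearly, hence affinely, independent. -/

open Finset Function Module Submodule

variable {E : Type*} [AddCommGroup E]

def LinearRelationsConstOn (K : Type*) [Semiring K] [Module K E] (S B : Finset E) : Prop :=
  ∀ c : E → K, ∑ v ∈ S, c v • v = 0 → ∀ x ∈ B, ∀ y ∈ B, c x = c y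

theorem LinearMap.ker_le_range_of_finrank_le {K M N P : Type*} [Field K] [AddCommGroup M]
    [Module K M] [FiniteDimensional K M] [AddCommGroup N] [Module K N] [AddCommGroup P]
    [Module K P] [FiniteDimensional K P] (L : M →ₗ[K] N) {T : P →ₗ[K] M} (hT : Injective T)
    (h : finrank K (ker L) + finrank K (range (L ∘ₗ T)) ≤ finrank K P) :
    ker L ≤ range T := by
  have hle : (ker (L ∘ₗ T)).map T ≤ ker L := by
    rintro _ ⟨g, hg, rfl⟩
    exact hg
  have hfin : finrank K (ker L) ≤ finrank K ((ker (L ∘ₗ T)).map T) := by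
    rw [← LinearEquiv.finrank_eq (equivMapOfInjective T hT _)]
    have := (L ∘ₗ T).finrank_range_add_finrank_ker
    omega
  rw [← eq_of_le_of_finrank_le hle hfin]
  exact map_le_range

section Relations

variable {K : Type*} [Field K] [Module K E] {κ : Type*} [Fintype κ] {S : Finset E}
  {V : κ → Finset E}

theorem linearRelationsConstOn_of_lt_finrank_add_card (hVS : ∀ k, V k ⊆ S)
    (hdisj : Pairwise (Disjoint on V)) (hne : ∀ k, (V k).Nonempty) {s : E}
    (hsum : ∀ k, ∑ v ∈ V k, v = s)
    (hrank : #S < finrank K (span K (S : Set E)) + Fintype.card κ) (k : κ) :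
    LinearRelationsConstOn K S (V k) := by
  classical
  let L := Fintype.linearCombination K (fun v : S => (v : E))
  let T := Fintype.linearCombination K fun (j : κ) (v : S) => if (v : E) ∈ V j then (1 : K) else 0
  have hT_apply : ∀ g j x (hx : x ∈ V j), T g ⟨x, hVS j hx⟩ = g j := by
    intro g j x hx
    rw [Fintype.linearCombination_apply, Finset.sum_apply, sum_eq_single j]
    · simp [hx]
    · intro i _ hij
      simp [disjoint_left.mp (hdisj hij.symm) hx]
    · simp
  have hT_inj : Injective T := by
    intro g g' h
    funext j
    obtain ⟨x, hx⟩ := hne j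
    rw [← hT_apply g j x hx, ← hT_apply g' j x hx, h]
  have hLT : ∀ g, L (T g) = (∑ j, g j) • s := by
    intro g
    simp only [L, T, Fintype.linearCombination_apply, Finset.sum_apply, Pi.smul_apply, smul_eq_mul,
      sum_smul]
    rw [sum_comm]
    refine sum_congr rfl fun i _ => ?_
    simp only [mul_ite, mul_one, mul_zero, ite_smul, zero_smul]
    rw [sum_coe_sort S (fun x => if x ∈ V i then g i • x else 0), sum_ite_mem,
      inter_eq_right.mpr (hVS i), ← smul_sum, hsum]
  have hker : finrank K (span K (S : Set E)) + finrank K (LinearMap.ker L) = #S := by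
    have := L.finrank_range_add_finrank_ker
    rwa [Fintype.range_linearCombination, Subtype.range_coe_subtype, finrank_fintype_fun_eq_card,
      Fintype.card_coe] at this
  have hrange : finrank K (LinearMap.range (L ∘ₗ T)) ≤ 1 := by
    have hle : LinearMap.range (L ∘ₗ T) ≤ K ∙ s := by
      rintro _ ⟨g, rfl⟩
      rw [LinearMap.comp_apply, hLT]
      exact mem_span_singleton.2 ⟨_, rfl⟩
    exact (finrank_mono hle).trans ((finrank_span_le_card ({s} : Set E)).trans (by simp))
  -- `T` sends block weights with sum zero into `ker L`; they form a subspace of dimension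
  -- `card κ - 1`, which is already the largest `ker L` can be.
  have hker_le : LinearMap.ker L ≤ LinearMap.range T :=
    L.ker_le_range_of_finrank_le hT_inj (by rw [finrank_fintype_fun_eq_card]; omega)
  intro c hc x hx y hy
  obtain ⟨g, hg⟩ : (fun v : S => c v) ∈ LinearMap.range T := hker_le (by
    rwa [LinearMap.mem_ker, Fintype.linearCombination_apply, sum_coe_sort S (fun v => c v • v)])
  have hval : ∀ z (hz : z ∈ V k), c z = g k := fun z hz => by simpa [hg] using hT_apply g k z hz
  rw [hval x hx, hval y hy]

end Relations

theorem linearIndepOn_of_forall_not_subset {K : Type*} [Ring K] [Module K E] {κ : Type*}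
    {S F : Finset E} {V : κ → Finset E} (hrel : ∀ k, LinearRelationsConstOn K S (V k))
    (hcover : ∀ x ∈ S, ∃ k, x ∈ V k) (hFS : F ⊆ S) (hVF : ∀ k, ¬ V k ⊆ F) :
    LinearIndepOn K id (F : Set E) := by
  classical
  rw [linearIndepOn_finset_iff]
  intro c hc x hxF
  let c' : E → K := fun v => if v ∈ F then c v else 0
  have hc' : ∑ v ∈ S, c' v • v = 0 := by
    simp only [c', ite_smul, zero_smul]
    rw [sum_ite_mem, inter_eq_right.mpr hFS]
    exact hc
  obtain ⟨k, hxk⟩ := hcover x (hFS hxF)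
  obtain ⟨z, hzk, hzF⟩ := not_subset.1 (hVF k)
  simpa [c', hxF, hzF] using hrel k c' hc' x hxk z hzk

section Convex

variable {𝕜 : Type*} [Field 𝕜] [LinearOrder 𝕜] [IsStrictOrderedRing 𝕜] [Module 𝕜 E]

theorem IsExtreme.mem_of_centerMass_mem {A B : Set E} (h : IsExtreme 𝕜 A B) (hA : Convex 𝕜 A)
    {ι : Type*} {t : Finset ι} {w : ι → 𝕜} {z : ι → E} (hw : ∀ i ∈ t, 0 < w i)
    (hz : ∀ i ∈ t, z i ∈ A) (hB : t.centerMass w z ∈ B) {i : ι} (hi : i ∈ t) : z i ∈ B := by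
  classical
  rcases (t.erase i).eq_empty_or_nonempty with hrest | hrest
  · rw [← insert_erase hi, hrest, insert_empty, centerMass_singleton _ _ (hw i hi).ne'] at hB
    exact hB
  have hrest_pos : 0 < ∑ j ∈ t.erase i, w j :=
    sum_pos (fun j hj => hw j (mem_of_mem_erase hj)) hrest
  have htotal_pos := add_pos (hw i hi) hrest_pos
  rw [← insert_erase hi, centerMass_insert (ha := notMem_erase i t) (hw := hrest_pos.ne')] at hB
  refine h.left_mem_of_mem_openSegment (hz i hi)
    (hA.centerMass_mem (fun j hj => (hw j (mem_of_mem_erase hj)).le) hrest_pos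
      (fun j hj => hz j (mem_of_mem_erase hj))) hB
    ⟨_, _, div_pos (hw i hi) htotal_pos, div_pos hrest_pos htotal_pos, ?_, rfl⟩
  field_simp

theorem notMem_convexHull_of_linearRelationsConstOn {S B F : Finset E}
    (hB : LinearRelationsConstOn 𝕜 S B) (hB2 : 1 < #B) (hFS : F ⊆ S) {y : E} (hyS : y ∈ S)
    (hyB : y ∈ B) (hyF : y ∉ F) : y ∉ convexHull 𝕜 (F : Set E) := by
  classical
  intro hy
  obtain ⟨w, hw0, -, hwy⟩ := Finset.mem_convexHull'.mp hy
  obtain ⟨y', hy'B, hy'y⟩ := exists_mem_ne hB2 y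
  let c : E → 𝕜 := fun v => (if v ∈ F then w v else 0) - if v = y then 1 else 0
  have hc : ∑ v ∈ S, c v • v = 0 := by
    simp only [c, sub_smul, sum_sub_distrib, ite_smul, zero_smul, one_smul]
    rw [sum_ite_mem, inter_eq_right.mpr hFS, hwy, sum_ite_eq' S y, if_pos hyS, sub_self]
  have hcy' : 0 ≤ c y' := by
    simp only [c, if_neg hy'y, sub_zero]
    split_ifs with h
    exacts [hw0 y' h, le_rfl]
  have hcy : c y = -1 := by simp [c, hyF]
  linarith [hB c hc y hyB y' hy'B]

variable {κ : Type*} {S F : Finset E} {V : κ → Finset E}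

theorem not_subset_of_isExtreme_convexHull (hrel : ∀ k, LinearRelationsConstOn 𝕜 S (V k))
    (hVS : ∀ k, V k ⊆ S) (hcover : ∀ x ∈ S, ∃ k, x ∈ V k) {m : ℕ} (hcard : ∀ k, #(V k) = m)
    (hm : 2 ≤ m) {s : E} (hsum : ∀ k, ∑ v ∈ V k, v = s) (hFS : F ⊆ S) (hF : F ≠ S)
    (hext : IsExtreme 𝕜 (convexHull 𝕜 (S : Set E)) (convexHull 𝕜 (F : Set E))) (k : κ) :
    ¬ V k ⊆ F := by
  intro hkF
  obtain ⟨y, hyS, hyF⟩ := exists_of_ssubset (hFS.ssubset_of_ne hF)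
  obtain ⟨j, hyj⟩ := hcover y hyS
  have hcent :
      (V j).centerMass (fun _ => (1 : 𝕜)) id = (V k).centerMass (fun _ => (1 : 𝕜)) id := by
    simp [centerMass, hcard, hsum]
  have hy : y ∈ convexHull 𝕜 (F : Set E) := by
    refine hext.mem_of_centerMass_mem (z := id) (convex_convexHull 𝕜 _) (fun _ _ => one_pos)
      (fun v hv => subset_convexHull 𝕜 _ (hVS j hv)) ?_ hyj
    rw [hcent]
    exact centerMass_mem_convexHull _ (fun _ _ => zero_le_one) (by simp [hcard]; omega)
      (fun v hv => hkF hv)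
  exact notMem_convexHull_of_linearRelationsConstOn (hrel j) (by rw [hcard j]; omega) hFS hyS hyj
    hyF hy

end Convex

theorem stmt_16_general
    (n : ℕ)
    (S V1 V2 V3 : Finset (Fin (2 * n) → ℝ))
    (hScard : S.card = n + 2)
    (hunion : V1 ∪ V2 ∪ V3 = S)
    (hd12 : Disjoint V1 V2) (hd13 : Disjoint V1 V3) (hd23 : Disjoint V2 V3)
    (hsum1 : ∑ v ∈ V1, v = fun _ => (1 : ℝ))
    (hsum2 : ∑ v ∈ V2, v = fun _ => (1 : ℝ))
    (hsum3 : ∑ v ∈ V3, v = fun _ => (1 : ℝ))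
    (hspan : Module.finrank ℝ (Submodule.span ℝ (S : Set (Fin (2 * n) → ℝ))) = n)
    (hm : 2 ≤ V1.card) (h12 : V1.card = V2.card) (h23 : V2.card = V3.card)
    : ∀ F ⊆ S, F.Nonempty → F ≠ S →
      IsExtreme ℝ (convexHull ℝ (S : Set (Fin (2 * n) → ℝ)))
        (convexHull ℝ (F : Set (Fin (2 * n) → ℝ))) →
      AffineIndependent ℝ (fun x : {x // x ∈ F} => (x : Fin (2 * n) → ℝ)) := by
  intro F hFS _ hF hext
  let V : Fin 3 → Finset (Fin (2 * n) → ℝ) := ![V1, V2, V3]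
  have hVS : ∀ k, V k ⊆ S := by
    rw [← hunion]
    intro k
    fin_cases k
    exacts [subset_union_left.trans subset_union_left, subset_union_right.trans subset_union_left,
      subset_union_right]
  have hcover : ∀ x ∈ S, ∃ k, x ∈ V k := by
    intro x hx
    simp only [← hunion, mem_union] at hx
    rcases hx with (hx | hx) | hx
    exacts [⟨0, hx⟩, ⟨1, hx⟩, ⟨2, hx⟩]
  have hdisj : Pairwise (Disjoint on V) := by
    intro i j hij
    fin_cases i <;> fin_cases j <;> simp_all [V, onFun, disjoint_comm]
  have hcard : ∀ k, #(V k) = #V1 := by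
    intro k; fin_cases k <;> simp [V, h12, h23]
  have hsum : ∀ k, ∑ v ∈ V k, v = fun _ => (1 : ℝ) := by
    intro k; fin_cases k <;> simp [V, hsum1, hsum2, hsum3]
  have hrel : ∀ k, LinearRelationsConstOn ℝ S (V k) :=
    linearRelationsConstOn_of_lt_finrank_add_card hVS hdisj
      (fun k => card_pos.1 (by rw [hcard k]; omega)) hsum (by simp [hScard, hspan])
  have hVF : ∀ k, ¬ V k ⊆ F :=
    not_subset_of_isExtreme_convexHull hrel hVS hcover hcard hm hsum hFS hF hext
  exact (linearIndepOn_of_forall_not_subset hrel hcover hFS hVF).linearIndependent.affineIndependent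

theorem stmt_16
    (n : ℕ) (hn : 0 < n)
    (S V1 V2 V3 : Finset (Fin (2 * n) → ℝ))
    (h01 : ∀ v ∈ S, ∀ i, v i = 0 ∨ v i = 1)
    (hScard : S.card = n + 2)
    (hunion : V1 ∪ V2 ∪ V3 = S)
    (hd12 : Disjoint V1 V2) (hd13 : Disjoint V1 V3) (hd23 : Disjoint V2 V3)
    (hne1 : V1.Nonempty) (hne2 : V2.Nonempty) (hne3 : V3.Nonempty)
    (hsum1 : ∑ v ∈ V1, v = fun _ => (1 : ℝ))
    (hsum2 : ∑ v ∈ V2, v = fun _ => (1 : ℝ))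
    (hsum3 : ∑ v ∈ V3, v = fun _ => (1 : ℝ))
    (hspan : Module.finrank ℝ (Submodule.span ℝ (S : Set (Fin (2 * n) → ℝ))) = n)
    (hm : 2 ≤ V1.card) (h12 : V1.card = V2.card) (h23 : V2.card = V3.card)
    : ∀ F ⊆ S, F.Nonempty → F ≠ S →
      IsExtreme ℝ (convexHull ℝ (S : Set (Fin (2 * n) → ℝ)))
        (convexHull ℝ (F : Set (Fin (2 * n) → ℝ))) →
      AffineIndependent ℝ (fun x : {x // x ∈ F} => (x : Fin (2 * n) → ℝ)) :=
  stmt_16_general n S V1 V2 V3 hScard hunion hd12 hd13 hd23 hsum1 hsum2 hsum3 hspan hm h12 h23
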